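/- Let (X_n) be i.i.d. random variables in class C_4 with regular-variation index α > 0 for the density at 0. Then for every x > 0 there exists c_x > 0 such that for all sufficiently large n, P[S_{n+1} ≤ x]/P[S_n ≤ x] ≥ c_x · P[X_1 ≤ 1/n]. Consequently, combined with the matching upper bound, the ratio P[S_{n+1} ≤ x]/P[S_n ≤ x] is of exact order P[X_1 ≤ 1/n]. -/

import Mathlib

open MeasureTheory ProbabilityTheory Filter Set
open scoped ENNReal Topology

/-- Convolution of two real functions. -/
noncomputable def conv (f g : ℝ → ℝ) : ℝ → ℝ := fun x => ∫ t, f t * g (x - t)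

/-- `iterConv f n` is the `n`-fold self-convolution `f^{*n}` (for `n ≥ 1`). -/
noncomputable def iterConv (f : ℝ → ℝ) : ℕ → ℝ → ℝ
  | 0 => fun _ => 0
  | 1 => f
  | n + 2 => conv f (iterConv f (n + 1))

/-!
Write `G u = P[X₁ ≤ u] = ∫₀ᵘ f`. Near `0` the density is monotone (its derivative is), and
regular variation gives the doubling bound `f (2t) ≤ 2^α f t`; away from `0` it is bounded on
compacts. Together these give `κ` with `G ((1 - ε) u) ≥ (1 - κ ε) G u` for `u ≤ x`, `ε ≤ 1/2`.
Rescaling the summands one at a time, independence turns this into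
`P[S_n ≤ (1 - ε) x] ≥ (1 - κ ε)^n P[S_n ≤ x]`. With `ε = 1/(n x)`,
`P[S_{n+1} ≤ x] ≥ P[X_{n+1} ≤ 1/n] P[S_n ≤ x - 1/n] ≥ (1 - κ/(n x))^n P[X₁ ≤ 1/n] P[S_n ≤ x]`,
and `(1 - κ/(n x))^n ≥ exp (-2κ/x)` as soon as `n ≥ 2κ/x`.
-/

lemma exists_monotoneOn_or_antitoneOn_of_monotoneOn_deriv {f : ℝ → ℝ} {ε : ℝ} (hε : 0 < ε)
    (hf : DifferentiableOn ℝ f (Ioo 0 ε)) (hf' : MonotoneOn (deriv f) (Ioo 0 ε)) :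
    ∃ η > 0, MonotoneOn f (Ioo 0 η) ∨ AntitoneOn f (Ioo 0 η) := by
  by_cases h : ∀ s ∈ Ioo 0 ε, 0 ≤ deriv f s
  · refine ⟨ε, hε, Or.inl (monotoneOn_of_deriv_nonneg (convex_Ioo 0 ε) hf.continuousOn ?_ ?_)⟩
      <;> rwa [interior_Ioo]
  · push Not at h
    obtain ⟨t, ht, hneg⟩ := h
    have hsub : Ioo 0 t ⊆ Ioo 0 ε := Ioo_subset_Ioo_right ht.2.le
    refine ⟨t, ht.1, Or.inr (antitoneOn_of_deriv_nonpos (convex_Ioo 0 t)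
      (hf.mono hsub).continuousOn ?_ ?_)⟩
    · rw [interior_Ioo]; exact hf.mono hsub
    · rw [interior_Ioo]
      intro s hs
      exact (hf' (hsub hs) ht hs.2.le).trans hneg.le

lemma exists_monotoneOn_or_antitoneOn_of_deriv {f : ℝ → ℝ} {ε : ℝ} (hε : 0 < ε)
    (hf : DifferentiableOn ℝ f (Ioo 0 ε))
    (hf' : MonotoneOn (deriv f) (Ioo 0 ε) ∨ AntitoneOn (deriv f) (Ioo 0 ε)) :
    ∃ η > 0, MonotoneOn f (Ioo 0 η) ∨ AntitoneOn f (Ioo 0 η) := by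
  rcases hf' with hf' | hf'
  · exact exists_monotoneOn_or_antitoneOn_of_monotoneOn_deriv hε hf hf'
  · have hneg : MonotoneOn (deriv (-f)) (Ioo 0 ε) := by
      rw [deriv.neg']; exact hf'.neg
    obtain ⟨η, hη, h | h⟩ :=
      exists_monotoneOn_or_antitoneOn_of_monotoneOn_deriv hε hf.neg hneg
    · exact ⟨η, hη, Or.inr (by simpa using h.neg)⟩
    · exact ⟨η, hη, Or.inl (by simpa using h.neg)⟩

lemma eventually_doubling_of_regularlyVarying {f L : ℝ → ℝ} {a α : ℝ} (ha : 0 < a)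
    (hL : ∀ t ∈ Ioc 0 a, 0 < L t)
    (hL2 : Tendsto (fun t => L (2 * t) / L t) (𝓝[>] 0) (𝓝 1))
    (hfL : ∀ t ∈ Ioc 0 a, f t = t ^ (α - 1) * L t) :
    ∀ᶠ t in 𝓝[>] 0, f (2 * t) ≤ 2 ^ α * f t ∧ 0 < f t := by
  have hsmall : ∀ᶠ t in 𝓝[>] (0 : ℝ), t ∈ Ioc 0 (a / 2) :=
    Ioc_mem_nhdsGT (by positivity)
  filter_upwards [hsmall, hL2.eventually_lt_const one_lt_two] with t ht hratio
  have ht' : t ∈ Ioc 0 a := ⟨ht.1, by linarith [ht.2]⟩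
  have h2t : 2 * t ∈ Ioc 0 a := ⟨by linarith [ht.1], by linarith [ht.2]⟩
  have hLt := hL t ht'
  have hpow : (2 * t) ^ (α - 1) = 2 ^ (α - 1) * t ^ (α - 1) :=
    Real.mul_rpow zero_le_two ht.1.le
  have htpow : 0 < t ^ (α - 1) := Real.rpow_pos_of_pos ht.1 _
  have h2pow : (2 : ℝ) ^ α = 2 ^ (α - 1) * 2 := by
    rw [Real.rpow_sub_one two_ne_zero]; ring
  refine ⟨?_, by rw [hfL t ht']; positivity⟩
  rw [hfL _ h2t, hfL t ht', hpow, h2pow]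
  have : L (2 * t) ≤ 2 * L t := ((div_lt_iff₀ hLt).1 hratio).le
  calc 2 ^ (α - 1) * t ^ (α - 1) * L (2 * t) ≤ 2 ^ (α - 1) * t ^ (α - 1) * (2 * L t) := by
        gcongr
    _ = 2 ^ (α - 1) * 2 * (t ^ (α - 1) * L t) := by ring

/-- Linearisation at `c = 1 - ε` of the bound `G (c u) ≥ c^κ G u` on the distribution function
`G u = ∫₀ᵘ f`. -/
def ShrinkControlled (f : ℝ → ℝ) (κ : ℝ) (s : Set ℝ) : Prop :=
  ∀ ε ∈ Icc (0 : ℝ) (1 / 2), ∀ u ∈ s, ∫ t in (1 - ε) * u..u, f t ≤ κ * ε * ∫ t in 0..u, f t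

namespace ShrinkControlled

variable {f : ℝ → ℝ} {κ : ℝ} {s : Set ℝ}

lemma mono_set {s' : Set ℝ} (h : ShrinkControlled f κ s) (hs : s' ⊆ s) :
    ShrinkControlled f κ s' :=
  fun ε hε u hu => h ε hε u (hs hu)

lemma mono_const {κ' : ℝ} (h : ShrinkControlled f κ s) (hκ : κ ≤ κ') (hf : ∀ t, 0 ≤ f t)
    (hs : s ⊆ Ici 0) : ShrinkControlled f κ' s := by
  intro ε hε u hu
  have hG : 0 ≤ ∫ t in 0..u, f t := intervalIntegral.integral_nonneg (hs hu) fun t _ => hf t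
  have hε0 : 0 ≤ ε := hε.1
  calc ∫ t in (1 - ε) * u..u, f t ≤ κ * ε * ∫ t in 0..u, f t := h ε hε u hu
    _ ≤ κ' * ε * ∫ t in 0..u, f t := by gcongr

lemma union {s' : Set ℝ} (h : ShrinkControlled f κ s) (h' : ShrinkControlled f κ s') :
    ShrinkControlled f κ (s ∪ s') := by
  rintro ε hε u (hu | hu)
  exacts [h ε hε u hu, h' ε hε u hu]

end ShrinkControlled

lemma shrinkControlled_of_monotoneOn {f : ℝ → ℝ} {η C : ℝ} (hf : ∀ t, 0 ≤ f t)
    (hfi : Integrable f) (hmono : MonotoneOn f (Ioo 0 η)) (hC : 0 ≤ C)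
    (hdouble : ∀ t ∈ Ioo 0 η, f (2 * t) ≤ C * f t) :
    ShrinkControlled f (2 * C) (Ioo 0 η) := by
  rintro ε ⟨hε0, hε⟩ u ⟨hu, huη⟩
  have hfu : ∀ s ∈ Icc ((1 - ε) * u) u, f s ≤ f u := fun s hs =>
    hmono ⟨lt_of_lt_of_le (by nlinarith) hs.1, hs.2.trans_lt huη⟩ ⟨hu, huη⟩ hs.2
  have hfu2 : ∀ s ∈ Icc (u / 2) u, f (u / 2) ≤ f s := fun s hs =>
    hmono ⟨by linarith, by linarith⟩ ⟨by linarith [hs.1], hs.2.trans_lt huη⟩ hs.1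
  have hupper : ∫ t in (1 - ε) * u..u, f t ≤ ε * u * f u := by
    calc ∫ t in (1 - ε) * u..u, f t ≤ ∫ _ in (1 - ε) * u..u, f u :=
          intervalIntegral.integral_mono_on (by nlinarith) hfi.intervalIntegrable
            intervalIntegrable_const hfu
      _ = ε * u * f u := by rw [intervalIntegral.integral_const, smul_eq_mul]; ring
  have hlower : u / 2 * f (u / 2) ≤ ∫ t in 0..u, f t := by
    calc u / 2 * f (u / 2) = ∫ _ in u / 2..u, f (u / 2) := by
          rw [intervalIntegral.integral_const, smul_eq_mul]; ring
      _ ≤ ∫ t in u / 2..u, f t :=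
          intervalIntegral.integral_mono_on (by linarith) intervalIntegrable_const
            hfi.intervalIntegrable hfu2
      _ ≤ ∫ t in 0..u, f t :=
          intervalIntegral.integral_mono_interval (by linarith) (by linarith) le_rfl
            (ae_of_all _ fun t => hf t) hfi.intervalIntegrable
  have hdu : f u ≤ C * f (u / 2) := by
    have h := hdouble (u / 2) ⟨by linarith, by linarith⟩
    rwa [mul_div_cancel₀ u two_ne_zero] at h
  calc ∫ t in (1 - ε) * u..u, f t ≤ ε * u * f u := hupper
    _ ≤ ε * u * (C * f (u / 2)) := by gcongr
    _ = 2 * C * ε * (u / 2 * f (u / 2)) := by ring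
    _ ≤ 2 * C * ε * ∫ t in 0..u, f t := by gcongr

lemma shrinkControlled_of_antitoneOn {f : ℝ → ℝ} {η : ℝ} (hfi : Integrable f)
    (hanti : AntitoneOn f (Ioo 0 η)) : ShrinkControlled f 1 (Ioo 0 η) := by
  rintro ε ⟨hε0, hε⟩ u ⟨hu, huη⟩
  have hc : 0 < 1 - ε := by linarith
  have hscale : ∫ t in 0..(1 - ε) * u, f t = (1 - ε) * ∫ t in 0..u, f ((1 - ε) * t) := by
    rw [intervalIntegral.mul_integral_comp_mul_left, mul_zero]
  have hpt : ∀ t ∈ Icc 0 u, f t ≤ f ((1 - ε) * t) := by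
    rintro t ⟨ht0, htu⟩
    rcases ht0.eq_or_lt with rfl | ht0
    · simp
    · exact hanti ⟨by positivity, by nlinarith⟩ ⟨ht0, htu.trans_lt huη⟩ (by nlinarith)
  have hmono : ∫ t in 0..u, f t ≤ ∫ t in 0..u, f ((1 - ε) * t) :=
    intervalIntegral.integral_mono_on hu.le hfi.intervalIntegrable
      (hfi.comp_mul_left' hc.ne').intervalIntegrable hpt
  rw [← intervalIntegral.integral_interval_sub_left hfi.intervalIntegrable
    hfi.intervalIntegrable, hscale]
  nlinarith

lemma exists_shrinkControlled_Icc {f : ℝ → ℝ} {δ x : ℝ} (hδ : 0 < δ) (hf : ∀ t, 0 ≤ f t)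
    (hfi : Integrable f) (hcont : ContinuousOn f (Icc (δ / 2) x))
    (hpos : 0 < ∫ t in 0..δ, f t) : ∃ κ, ShrinkControlled f κ (Icc δ x) := by
  obtain ⟨M, hM⟩ := isCompact_Icc.exists_bound_of_continuousOn hcont
  refine ⟨x * M / ∫ t in 0..δ, f t, ?_⟩
  rintro ε ⟨hε0, hε⟩ u ⟨hδu, hux⟩
  have hfM : ∀ s ∈ Icc ((1 - ε) * u) u, f s ≤ M := fun s hs =>
    (le_abs_self _).trans (hM s ⟨le_trans (by nlinarith) hs.1, hs.2.trans hux⟩)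
  have hM0 : 0 ≤ M := (abs_nonneg _).trans (hM u ⟨by linarith, hux⟩)
  have hGδ : ∫ t in 0..δ, f t ≤ ∫ t in 0..u, f t :=
    intervalIntegral.integral_mono_interval le_rfl hδ.le hδu (ae_of_all _ fun t => hf t)
      hfi.intervalIntegrable
  calc ∫ t in (1 - ε) * u..u, f t ≤ ∫ _ in (1 - ε) * u..u, M :=
        intervalIntegral.integral_mono_on (by nlinarith) hfi.intervalIntegrable
          intervalIntegrable_const hfM
    _ = ε * u * M := by rw [intervalIntegral.integral_const, smul_eq_mul]; ring
    _ ≤ ε * x * M := by gcongr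
    _ = x * M / (∫ t in 0..δ, f t) * ε * ∫ t in 0..δ, f t := by field_simp
    _ ≤ x * M / (∫ t in 0..δ, f t) * ε * ∫ t in 0..u, f t := by
        gcongr
        exact mul_nonneg (div_nonneg (mul_nonneg (by linarith) hM0) hpos.le) hε0

lemma exists_shrinkControlled {f : ℝ → ℝ} {C : ℝ} (hf : ∀ t, 0 ≤ f t) (hfi : Integrable f)
    (hcont : ContinuousOn f (Ioi 0)) (hC : 0 ≤ C)
    (hmono : ∃ η > 0, MonotoneOn f (Ioo 0 η) ∨ AntitoneOn f (Ioo 0 η))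
    (hdouble : ∀ᶠ t in 𝓝[>] 0, f (2 * t) ≤ C * f t ∧ 0 < f t) (x : ℝ) :
    ∃ κ ≥ 1, ShrinkControlled f κ (Ioc 0 x) := by
  obtain ⟨η, hη, hfη⟩ := hmono
  obtain ⟨η', hη', hsub⟩ := mem_nhdsGT_iff_exists_Ioo_subset.1
    (hdouble.and (Ioo_mem_nhdsGT hη))
  obtain ⟨κ₀, hnear⟩ : ∃ κ₀, ShrinkControlled f κ₀ (Ioo 0 η') := by
    rcases hfη with hfη | hfη
    · exact ⟨2 * C, shrinkControlled_of_monotoneOn hf hfi (hfη.mono fun t ht => (hsub ht).2) hC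
        fun t ht => (hsub ht).1.1⟩
    · exact ⟨1, shrinkControlled_of_antitoneOn hfi (hfη.mono fun t ht => (hsub ht).2)⟩
  have hδ : 0 < η' / 2 := half_pos hη'
  have hpos : 0 < ∫ t in 0..η' / 2, f t :=
    intervalIntegral.intervalIntegral_pos_of_pos_on hfi.intervalIntegrable
      (fun t ht => (hsub ⟨ht.1, by linarith [ht.2]⟩).1.2) hδ
  obtain ⟨κ₁, haway⟩ := exists_shrinkControlled_Icc (x := x) hδ hf hfi
    (hcont.mono fun t ht => show 0 < t by linarith [ht.1]) hpos
  refine ⟨max (max κ₀ κ₁) 1, le_max_right _ _, ?_⟩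
  have hcover : Ioc 0 x ⊆ Ioo 0 η' ∪ Icc (η' / 2) x := fun u hu => by
    rcases lt_or_ge u η' with h | h
    exacts [Or.inl ⟨hu.1, h⟩, Or.inr ⟨by linarith, hu.2⟩]
  refine ((hnear.mono_const ?_ hf ?_).union (haway.mono_const ?_ hf ?_)).mono_set hcover
  · exact (le_max_left _ _).trans (le_max_left _ _)
  · exact fun t ht => ht.1.le
  · exact (le_max_right _ _).trans (le_max_left _ _)
  · exact fun t ht => hδ.le.trans ht.1

lemma withDensity_ofReal_Iic {f : ℝ → ℝ} (hf : ∀ t, 0 ≤ f t) (hf0 : ∀ t ≤ 0, f t = 0)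
    (hfi : Integrable f) (u : ℝ) :
    volume.withDensity (fun t => ENNReal.ofReal (f t)) (Iic u) =
      ENNReal.ofReal (∫ t in 0..u, f t) := by
  rw [withDensity_apply _ measurableSet_Iic,
    ← ofReal_integral_eq_lintegral_ofReal hfi.integrableOn (ae_of_all _ hf),
    ← intervalIntegral.integral_Iic_sub_Iic hfi.integrableOn hfi.integrableOn,
    setIntegral_eq_zero_of_forall_eq_zero (t := Iic 0) hf0, sub_zero]

lemma ShrinkControlled.ofReal_one_sub_mul_withDensity_Iic_le {f : ℝ → ℝ} {κ x ε u : ℝ}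
    (h : ShrinkControlled f κ (Ioc 0 x)) (hf : ∀ t, 0 ≤ f t) (hf0 : ∀ t ≤ 0, f t = 0)
    (hfi : Integrable f) (hε : ε ∈ Icc (0 : ℝ) (1 / 2)) (hu : u ≤ x) :
    ENNReal.ofReal (1 - κ * ε) * volume.withDensity (fun t => ENNReal.ofReal (f t)) (Iic u) ≤
      volume.withDensity (fun t => ENNReal.ofReal (f t)) (Iic ((1 - ε) * u)) := by
  rw [withDensity_ofReal_Iic hf hf0 hfi, withDensity_ofReal_Iic hf hf0 hfi]
  rcases le_or_gt u 0 with hu0 | hu0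
  · have : ∫ t in 0..u, f t ≤ 0 := by
      rw [intervalIntegral.integral_symm, neg_nonpos]
      exact intervalIntegral.integral_nonneg hu0 fun t _ => hf t
    simp [ENNReal.ofReal_of_nonpos this]
  · rw [← ENNReal.ofReal_mul' (intervalIntegral.integral_nonneg hu0.le fun t _ => hf t)]
    apply ENNReal.ofReal_le_ofReal
    have hloss := h ε hε u ⟨hu0, hu⟩
    rw [← intervalIntegral.integral_interval_sub_left hfi.intervalIntegrable
      hfi.intervalIntegrable] at hloss
    linarith

lemma integrable_of_map_eq_withDensity {Ω : Type*} [MeasurableSpace Ω] {P : Measure Ω}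
    [IsFiniteMeasure P] {Y : Ω → ℝ} {f : ℝ → ℝ} (hf : Measurable f) (hf0 : ∀ t, 0 ≤ f t)
    (h : P.map Y = volume.withDensity (fun t => ENNReal.ofReal (f t))) : Integrable f := by
  refine ⟨hf.aestronglyMeasurable, (hasFiniteIntegral_iff_ofReal (ae_of_all _ hf0)).2 ?_⟩
  rw [← setLIntegral_univ, ← withDensity_apply _ MeasurableSet.univ, ← h]
  exact measure_lt_top _ _

lemma exp_neg_two_mul_le_one_sub_pow {y : ℝ} (hy0 : 0 ≤ y) (hy : y ≤ 1 / 2) (n : ℕ) :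
    Real.exp (-(2 * n * y)) ≤ (1 - y) ^ n := by
  calc Real.exp (-(2 * n * y)) = Real.exp (-(2 * y)) ^ n := by
        rw [← Real.exp_nat_mul]; ring_nf
    _ ≤ (1 - y) ^ n := by
        refine pow_le_pow_left₀ (Real.exp_pos _).le ?_ n
        rw [Real.exp_neg, inv_le_iff_one_le_mul₀ (Real.exp_pos _)]
        nlinarith [Real.add_one_le_exp (2 * y)]

section IndependentSums

variable {Ω : Type*} [MeasurableSpace Ω] {P : Measure Ω}

lemma measure_add_le_eq_lintegral [IsFiniteMeasure P] {Z T : Ω → ℝ} (hZ : Measurable Z)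
    (hT : Measurable T) (hZT : IndepFun Z T P) (t : ℝ) :
    P {ω | Z ω + T ω ≤ t} = ∫⁻ b, P {ω | Z ω ≤ t - b} ∂P.map T := by
  have hset : MeasurableSet {p : ℝ × ℝ | p.2 ≤ t - p.1} :=
    measurableSet_le measurable_snd (measurable_const.sub measurable_fst)
  have hpre : {ω | Z ω + T ω ≤ t} = (fun ω => (T ω, Z ω)) ⁻¹' {p | p.2 ≤ t - p.1} := by
    ext ω; simp [le_sub_iff_add_le]
  rw [hpre, ← Measure.map_apply (hT.prodMk hZ) hset,
    (indepFun_iff_map_prod_eq_prod_map_map hT.aemeasurable hZ.aemeasurable).1 hZT.symm,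
    Measure.prod_apply hset]
  refine lintegral_congr fun b => ?_
  rw [Measure.map_apply hZ (measurable_prodMk_left hset)]
  rfl

lemma mul_measure_add_le_le_of_indepFun [IsFiniteMeasure P] {Y W T : Ω → ℝ} (hY : Measurable Y)
    (hW : Measurable W) (hT : Measurable T) (hYT : IndepFun Y T P) (hWT : IndepFun W T P)
    (hT0 : ∀ᵐ ω ∂P, 0 ≤ T ω) {θ : ℝ≥0∞} {t : ℝ}
    (H : ∀ u ≤ t, θ * P {ω | W ω ≤ u} ≤ P {ω | Y ω ≤ u}) :
    θ * P {ω | W ω + T ω ≤ t} ≤ P {ω | Y ω + T ω ≤ t} := by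
  rw [measure_add_le_eq_lintegral hW hT hWT, measure_add_le_eq_lintegral hY hT hYT]
  refine (lintegral_const_mul_le _ _).trans (lintegral_mono_ae ?_)
  filter_upwards [(ae_map_iff hT.aemeasurable measurableSet_Ici).2 hT0] with b hb
  exact H _ (by linarith)

variable {X : ℕ → Ω → ℝ}

lemma pow_mul_measure_sum_le_le [IsFiniteMeasure P] (hmeas : ∀ i, Measurable (X i))
    (hindep : iIndepFun X P) (hnn : ∀ i, ∀ᵐ ω ∂P, 0 ≤ X i ω) {c : ℝ} (hc : 0 < c)
    {θ : ℝ≥0∞} {t : ℝ} (H : ∀ i, ∀ u ≤ t, θ * P {ω | X i ω ≤ u} ≤ P {ω | X i ω ≤ c * u})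
    (n : ℕ) {u : ℝ} (hu : u ≤ t) :
    θ ^ n * P {ω | ∑ i ∈ Finset.range n, X i ω ≤ u} ≤
      P {ω | ∑ i ∈ Finset.range n, X i ω ≤ c * u} := by
  induction n generalizing u with
  | zero =>
    simp only [pow_zero, one_mul, Finset.range_zero, Finset.sum_empty]
    exact measure_mono fun ω (h : 0 ≤ u) => show 0 ≤ c * u from mul_nonneg hc.le h
  | succ n ih =>
    set S : Ω → ℝ := fun ω => ∑ i ∈ Finset.range n, X i ω
    have hS : Measurable S := Finset.measurable_sum _ fun i _ => hmeas i
    have hSX : IndepFun S (X n) P := by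
      simpa [S, ← Finset.sum_apply] using
        hindep.indepFun_finsetSum_of_notMem hmeas Finset.notMem_range_self
    have hdiv : Measurable fun y : ℝ => y / c := measurable_id.div_const c
    have hdiv_le : ∀ (Z : Ω → ℝ) v, {ω | Z ω / c ≤ v} = {ω | Z ω ≤ c * v} := fun Z v => by
      ext ω; exact div_le_iff₀' hc
    have hS0 : ∀ᵐ ω ∂P, 0 ≤ S ω := by
      filter_upwards [ae_all_iff.2 hnn] with ω hω
      exact Finset.sum_nonneg fun i _ => hω i
    have hXc0 : ∀ᵐ ω ∂P, 0 ≤ X n ω / c := by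
      filter_upwards [hnn n] with ω hω
      positivity
    have hrescale_X : θ * P {ω | X n ω + S ω ≤ u} ≤ P {ω | X n ω / c + S ω ≤ u} :=
      mul_measure_add_le_le_of_indepFun ((hmeas n).div_const c) (hmeas n) hS
        (hSX.symm.comp hdiv measurable_id) hSX.symm hS0
        fun v hv => by rw [hdiv_le]; exact H n v (hv.trans hu)
    have hrescale_S : θ ^ n * P {ω | S ω + X n ω / c ≤ u} ≤ P {ω | S ω / c + X n ω / c ≤ u} :=
      mul_measure_add_le_le_of_indepFun (hS.div_const c) hS ((hmeas n).div_const c)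
        (hSX.comp hdiv hdiv) (hSX.comp measurable_id hdiv) hXc0
        fun v hv => by rw [hdiv_le]; exact ih (hv.trans hu)
    calc θ ^ (n + 1) * P {ω | ∑ i ∈ Finset.range (n + 1), X i ω ≤ u}
        = θ ^ n * (θ * P {ω | X n ω + S ω ≤ u}) := by
          simp only [pow_succ, mul_assoc, Finset.sum_range_succ, add_comm, S]
      _ ≤ θ ^ n * P {ω | X n ω / c + S ω ≤ u} := by gcongr
      _ = θ ^ n * P {ω | S ω + X n ω / c ≤ u} := by simp only [add_comm]
      _ ≤ P {ω | S ω / c + X n ω / c ≤ u} := hrescale_S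
      _ = P {ω | ∑ i ∈ Finset.range (n + 1), X i ω ≤ c * u} := by
          simp only [Finset.sum_range_succ, S, ← add_div, div_le_iff₀' hc]

lemma measure_sum_le_mul_measure_le_le (hmeas : ∀ i, Measurable (X i)) (hindep : iIndepFun X P)
    (n : ℕ) (a b : ℝ) :
    P {ω | ∑ i ∈ Finset.range n, X i ω ≤ a} * P {ω | X n ω ≤ b} ≤
      P {ω | ∑ i ∈ Finset.range (n + 1), X i ω ≤ a + b} := by
  have h := (hindep.indepFun_finsetSum_of_notMem hmeas (Finset.notMem_range_self (n := n))
    ).measure_inter_preimage_eq_mul (Iic a) (Iic b) measurableSet_Iic measurableSet_Iic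
  simp only [preimage, mem_Iic, Finset.sum_apply] at h
  rw [← h]
  refine measure_mono fun ω ⟨(ha : ∑ i ∈ Finset.range n, X i ω ≤ a), (hb : X n ω ≤ b)⟩ => ?_
  show ∑ i ∈ Finset.range (n + 1), X i ω ≤ a + b
  rw [Finset.sum_range_succ]
  linarith

lemma measure_sum_le_ne_zero (hindep : iIndepFun X P)
    (hX : ∀ i, ∀ t > 0, P {ω | X i ω ≤ t} ≠ 0) (n : ℕ) {x : ℝ} (hx : 0 < x) :
    P {ω | ∑ i ∈ Finset.range n, X i ω ≤ x} ≠ 0 := by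
  have hsub : (⋂ i ∈ Finset.range n, X i ⁻¹' Iic (x / n)) ⊆
      {ω | ∑ i ∈ Finset.range n, X i ω ≤ x} := fun ω hω => by
    simp only [mem_iInter, mem_preimage, mem_Iic] at hω
    calc ∑ i ∈ Finset.range n, X i ω ≤ ∑ _i ∈ Finset.range n, x / n := Finset.sum_le_sum hω
      _ ≤ x := by
        rcases n.eq_zero_or_pos with rfl | hn
        · simpa using hx.le
        · simp [mul_div_cancel₀ x (Nat.cast_ne_zero.2 hn.ne')]
  refine fun h0 => ?_
  have hprod := hindep.measure_inter_preimage_eq_mul (Finset.range n)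
    (sets := fun _ => Iic (x / n)) fun _ _ => measurableSet_Iic
  rw [measure_mono_null hsub h0, eq_comm, Finset.prod_eq_zero_iff] at hprod
  obtain ⟨i, hi, hzero⟩ := hprod
  exact hX i _ (div_pos hx (Nat.cast_pos.2 (Nat.zero_lt_of_lt (Finset.mem_range.1 hi)))) hzero

lemma ofReal_exp_mul_measure_mul_measure_sum_le [IsFiniteMeasure P]
    (hmeas : ∀ i, Measurable (X i)) (hindep : iIndepFun X P) (hnn : ∀ i, ∀ᵐ ω ∂P, 0 ≤ X i ω)
    {μ : Measure ℝ} (hμ : ∀ i u, P {ω | X i ω ≤ u} = μ (Iic u)) {κ x : ℝ} (hκ : 1 ≤ κ)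
    (hx : 0 < x) (hshrink : ∀ ε ∈ Icc (0 : ℝ) (1 / 2), ∀ u ≤ x,
      ENNReal.ofReal (1 - κ * ε) * μ (Iic u) ≤ μ (Iic ((1 - ε) * u)))
    {n : ℕ} (hn0 : 0 < n) (hn : 2 * κ ≤ n * x) :
    ENNReal.ofReal (Real.exp (-(2 * κ / x))) * μ (Iic (1 / n)) *
        P {ω | ∑ i ∈ Finset.range n, X i ω ≤ x} ≤
      P {ω | ∑ i ∈ Finset.range (n + 1), X i ω ≤ x} := by
  have hnx : 0 < (n : ℝ) * x := by positivity
  set ε := 1 / ((n : ℝ) * x) with hε_def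
  have hκε : κ * ε ≤ 1 / 2 := by
    rw [hε_def, mul_one_div, div_le_iff₀ hnx]; linarith
  have hε : ε ∈ Icc (0 : ℝ) (1 / 2) :=
    ⟨by positivity, (le_mul_of_one_le_left (by positivity) hκ).trans hκε⟩
  have hexp : Real.exp (-(2 * κ / x)) ≤ (1 - κ * ε) ^ n := by
    convert exp_neg_two_mul_le_one_sub_pow (by positivity) hκε n using 3
    rw [hε_def]; field_simp
  have hc : 0 < 1 - ε := by linarith [hε.2]
  have hstep := (mul_le_mul_left (pow_mul_measure_sum_le_le hmeas hindep hnn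
    hc (fun i u hu => by simpa only [hμ] using hshrink ε hε u hu) n le_rfl)
    _).trans (measure_sum_le_mul_measure_le_le hmeas hindep n _ (1 / n))
  rw [show (1 - ε) * x + 1 / n = x by rw [hε_def]; field_simp; ring, hμ] at hstep
  refine le_trans ?_ hstep
  rw [mul_right_comm, ← ENNReal.ofReal_pow (by linarith : 0 ≤ 1 - κ * ε)]
  gcongr

end IndependentSums

lemma le_toReal_div_of_ofReal_mul_le {c : ℝ} {a b d : ℝ≥0∞} (hc : 0 ≤ c) (hb : b ≠ 0)
    (hb' : b ≠ ⊤) (hd : d ≠ ⊤) (h : ENNReal.ofReal c * a * b ≤ d) :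
    c * a.toReal ≤ d.toReal / b.toReal := by
  rw [le_div_iff₀ (ENNReal.toReal_pos hb hb')]
  simpa [ENNReal.toReal_mul, ENNReal.toReal_ofReal hc] using ENNReal.toReal_mono hd h

theorem stmt16_general
    {Ω : Type*} [MeasurableSpace Ω] (P : Measure Ω) [IsProbabilityMeasure P]
    (X : ℕ → Ω → ℝ)
    (hmeas : ∀ i, Measurable (X i))
    (hindep : iIndepFun X P)
    (hident : ∀ i, IdentDistrib (X i) (X 0) P P)
    (hpos : ∀ᵐ ω ∂P, 0 < X 0 ω)
    (f : ℝ → ℝ) (hmeasf : Measurable f) (hfnn : ∀ t, 0 ≤ f t)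
    (hf0 : ∀ t ≤ (0 : ℝ), f t = 0)
    (hdens : Measure.map (X 0) P =
      (volume : Measure ℝ).withDensity (fun t => ENNReal.ofReal (f t)))
    (hF : ∀ t : ℝ, 0 < t → P {ω | X 0 ω ≤ t} ≠ 0)
    (hC1 : ContDiffOn ℝ 1 f (Ioi 0))
    (hmono : ∃ ε > (0 : ℝ),
      MonotoneOn (deriv f) (Ioo 0 ε) ∨ AntitoneOn (deriv f) (Ioo 0 ε))
    (α : ℝ)
    (hreg : ∃ a > (0 : ℝ), ∃ L : ℝ → ℝ,
      (∀ t ∈ Ioc (0 : ℝ) a, 0 < L t) ∧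
      (∀ l : ℝ, 0 < l →
        Tendsto (fun t => L (l * t) / L t) (𝓝[>] (0 : ℝ)) (nhds 1)) ∧
      ∀ t ∈ Ioc (0 : ℝ) a, f t = t ^ (α - 1) * L t)
    :
    ∀ x : ℝ, 0 < x → ∃ c > (0 : ℝ), ∃ N : ℕ, 1 ≤ N ∧
      ∀ n : ℕ, N ≤ n →
        c * (P {ω | X 0 ω ≤ 1 / (n : ℝ)}).toReal ≤
          (P {ω | ∑ i ∈ Finset.range (n + 1), X i ω ≤ x}).toReal
            / (P {ω | ∑ i ∈ Finset.range n, X i ω ≤ x}).toReal := by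
  have hcdf : ∀ i u, P {ω | X i ω ≤ u} =
      volume.withDensity (fun t => ENNReal.ofReal (f t)) (Iic u) := fun i u => by
    rw [← hdens, ← (hident i).map_eq, Measure.map_apply (hmeas i) measurableSet_Iic]; rfl
  have hfi : Integrable f := integrable_of_map_eq_withDensity hmeasf hfnn hdens
  have hnn : ∀ i, ∀ᵐ ω ∂P, 0 ≤ X i ω := fun i => (hident i).symm.ae_snd
    (measurableSet_le measurable_const measurable_id) (hpos.mono fun _ h => h.le)
  obtain ⟨η, hη, hfη⟩ := hmono
  obtain ⟨a, ha, L, hL, hLlim, hfL⟩ := hreg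
  intro x hx
  obtain ⟨κ, hκ1, hκ⟩ := exists_shrinkControlled hfnn hfi hC1.continuousOn (by positivity)
    (exists_monotoneOn_or_antitoneOn_of_deriv hη ((hC1.differentiableOn one_ne_zero).mono
      fun t ht => ht.1) hfη)
    (eventually_doubling_of_regularlyVarying ha hL (hLlim 2 two_pos) hfL) x
  refine ⟨Real.exp (-(2 * κ / x)), Real.exp_pos _, ⌈2 * κ / x⌉₊ ⊔ 1, le_max_right _ _,
    fun n hn => ?_⟩
  have hN : 2 * κ ≤ n * x :=
    (div_le_iff₀ hx).1 ((Nat.le_ceil _).trans (Nat.cast_le.2 (le_of_max_le_left hn)))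
  refine le_toReal_div_of_ofReal_mul_le (Real.exp_pos _).le
    (measure_sum_le_ne_zero hindep (fun i t ht => by rw [hcdf, ← hcdf 0]; exact hF t ht) n hx)
    (measure_ne_top _ _) (measure_ne_top _ _) ?_
  rw [hcdf 0]
  exact ofReal_exp_mul_measure_mul_measure_sum_le hmeas hindep hnn hcdf hκ1 hx
    (fun ε hε u hu => hκ.ofReal_one_sub_mul_withDensity_Iic_le hfnn hf0 hfi hε hu)
    (le_of_max_le_right hn) hN

theorem stmt16
    {Ω : Type*} [MeasurableSpace Ω] (P : Measure Ω) [IsProbabilityMeasure P]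
    (X : ℕ → Ω → ℝ)
    (hmeas : ∀ i, Measurable (X i))
    (hindep : iIndepFun X P)
    (hident : ∀ i, IdentDistrib (X i) (X 0) P P)
    (hpos : ∀ᵐ ω ∂P, 0 < X 0 ω)
    (f : ℝ → ℝ) (hmeasf : Measurable f) (hfnn : ∀ t, 0 ≤ f t)
    (hf0 : ∀ t ≤ (0 : ℝ), f t = 0)
    (hdens : Measure.map (X 0) P =
      (volume : Measure ℝ).withDensity (fun t => ENNReal.ofReal (f t)))
    (hF : ∀ t : ℝ, 0 < t → P {ω | X 0 ω ≤ t} ≠ 0)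
    (hC1 : ContDiffOn ℝ 1 f (Ioi 0))
    (hmono : ∃ ε > (0 : ℝ),
      MonotoneOn (deriv f) (Ioo 0 ε) ∨ AntitoneOn (deriv f) (Ioo 0 ε))
    (α : ℝ) (hα : 0 < α)
    (hreg : ∃ a > (0 : ℝ), ∃ L : ℝ → ℝ,
      (∀ t ∈ Ioc (0 : ℝ) a, 0 < L t) ∧
      (∀ l : ℝ, 0 < l →
        Tendsto (fun t => L (l * t) / L t) (𝓝[>] (0 : ℝ)) (nhds 1)) ∧
      ∀ t ∈ Ioc (0 : ℝ) a, f t = t ^ (α - 1) * L t)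
    :
    ∀ x : ℝ, 0 < x → ∃ c > (0 : ℝ), ∃ N : ℕ, 1 ≤ N ∧
      ∀ n : ℕ, N ≤ n →
        c * (P {ω | X 0 ω ≤ 1 / (n : ℝ)}).toReal ≤
          (P {ω | ∑ i ∈ Finset.range (n + 1), X i ω ≤ x}).toReal
            / (P {ω | ∑ i ∈ Finset.range n, X i ω ≤ x}).toReal :=
  stmt16_general P X hmeas hindep hident hpos f hmeasf hfnn hf0 hdens hF hC1 hmono α hreg
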